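/- arXiv:cs/0506077 — 5 statements merged into one kernel-verified Lean document; each statement's English description precedes it below -/
import Mathlib

section
/- Fix a bandwidth W > 0, noise density N₀ > 0, transmit power P > 0, an integer K ≥ 1, a parameter ρ ∈ (0,1], and a tolerable error probability P_e ∈ (0,1). Let φ₁ = ρ·ln(1 + P/((1+ρ)((K−1)P + N₀W))), and for each positive integer M let S₁(M) = −ln P_e + ρ·ln M and f₁(M) = K·W·φ₁·(ln M)/⌈S₁(M)⌉_{φ₁}. Then f₁ increases with the message alphabet size in the following sense: for every positive integer M¹ there exists a positive integer M² > M¹ such that f₁(M²) > f₁(M¹). -/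
/-- `qceil x q` is the smallest positive integer multiple of `q` that is at least `x`,
i.e. `min {n*q : n ∈ ℤ, n ≥ 1, x ≤ n*q}`. -/
noncomputable def qceil (x q : ℝ) : ℝ := q * ((max 1 ⌈x / q⌉ : ℤ) : ℝ)

/-!
As `M → ∞`, the service requirement `S₁(M) = -ln Pₑ + ρ ln M` grows like `ρ ln M`, and
rounding it up to a multiple of `φ₁` costs less than `φ₁`, so `f₁(M)` tends to `K W φ₁ / ρ`.
Since `-ln Pₑ > 0`, the rounded service requirement always exceeds `ρ ln M`, so every value
`f₁(M)` lies strictly below that limit and is exceeded by `f₁(M₂)` for all large `M₂`.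
-/

open Filter Topology

section qceil

variable {x q : ℝ}

lemma qceil_pos (hq : 0 < q) : 0 < qceil x q :=
  mul_pos hq (by exact_mod_cast lt_max_of_lt_left one_pos)

lemma le_qceil (hq : 0 < q) : x ≤ qceil x q := by
  have h : x / q ≤ ((max 1 ⌈x / q⌉ : ℤ) : ℝ) :=
    (Int.le_ceil _).trans (by exact_mod_cast le_max_right _ _)
  rwa [div_le_iff₀' hq] at h

lemma qceil_le_add (hq : 0 < q) (hx : 0 ≤ x) : qceil x q ≤ x + q := by
  have h : ((max 1 ⌈x / q⌉ : ℤ) : ℝ) ≤ x / q + 1 := by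
    push_cast
    exact max_le (by linarith [div_nonneg hx hq.le]) (Int.ceil_lt_add_one _).le
  calc qceil x q ≤ q * (x / q + 1) := mul_le_mul_of_nonneg_left h hq.le
    _ = x + q := by field_simp

end qceil

lemma tendsto_mul_div_add_mul_atTop (c b : ℝ) {d : ℝ} (hd : d ≠ 0) :
    Tendsto (fun t : ℝ => c * t / (b + d * t)) atTop (𝓝 (c / d)) := by
  have h : Tendsto (fun t : ℝ => c / (b * t⁻¹ + d)) atTop (𝓝 (c / (b * 0 + d))) :=
    tendsto_const_nhds.div ((tendsto_inv_atTop_zero.const_mul b).add_const d) (by simpa using hd)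
  rw [mul_zero, zero_add] at h
  refine h.congr' ((eventually_gt_atTop 0).mono fun t ht => ?_)
  field_simp

section rate

variable {c a ρ q : ℝ}

lemma mul_div_qceil_lt (hc : 0 < c) (ha : 0 < a) (hρ : 0 < ρ) (hq : 0 < q) (t : ℝ) :
    c * t / qceil (a + ρ * t) q < c / ρ := by
  rw [div_lt_div_iff₀ (qceil_pos hq) hρ, mul_assoc, mul_comm t]
  exact mul_lt_mul_of_pos_left ((lt_add_of_pos_left _ ha).trans_le (le_qceil hq)) hc

lemma tendsto_mul_div_qceil (hc : 0 ≤ c) (ha : 0 ≤ a) (hρ : 0 < ρ) (hq : 0 < q) :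
    Tendsto (fun t => c * t / qceil (a + ρ * t) q) atTop (𝓝 (c / ρ)) := by
  refine tendsto_of_tendsto_of_tendsto_of_le_of_le'
    (tendsto_mul_div_add_mul_atTop c (a + q) hρ.ne') tendsto_const_nhds ?_ ?_
  · filter_upwards [eventually_ge_atTop 0] with t ht
    have hS : 0 ≤ a + ρ * t := by positivity
    gcongr
    · exact qceil_pos hq
    · linarith [qceil_le_add hq hS]
  · filter_upwards [eventually_ge_atTop 0] with t ht
    rw [div_le_div_iff₀ (qceil_pos hq) hρ, mul_assoc, mul_comm t]
    gcongr
    linarith [le_qceil (x := a + ρ * t) hq]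

end rate

/-- Corollary 3 (monotonicity part): the maximum stable nat arrival rate `f₁`
increases with the message alphabet size. -/
theorem stmt0 (W N₀ P : ℝ) (hW : 0 < W) (hN₀ : 0 < N₀) (hP : 0 < P)
    (K : ℕ) (hK : 1 ≤ K) (ρ : ℝ) (hρ : ρ ∈ Set.Ioc (0 : ℝ) 1)
    (Pe : ℝ) (hPe : Pe ∈ Set.Ioo (0 : ℝ) 1) :
    let φ₁ : ℝ := ρ * Real.log (1 + P / ((1 + ρ) * (((K : ℝ) - 1) * P + N₀ * W)))
    let S₁ : ℕ → ℝ := fun M => -Real.log Pe + ρ * Real.log M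
    let f₁ : ℕ → ℝ := fun M => (K : ℝ) * W * φ₁ * Real.log M / qceil (S₁ M) φ₁
    ∀ M₁ : ℕ, 0 < M₁ → ∃ M₂ : ℕ, M₁ < M₂ ∧ f₁ M₁ < f₁ M₂ := by
  intro φ₁ S₁ f₁ M₁ _
  have hK' : (0 : ℝ) ≤ (K : ℝ) - 1 := sub_nonneg.2 (by exact_mod_cast hK)
  have hden : 0 < (1 + ρ) * (((K : ℝ) - 1) * P + N₀ * W) :=
    mul_pos (by linarith [hρ.1])
      (add_pos_of_nonneg_of_pos (mul_nonneg hK' hP.le) (mul_pos hN₀ hW))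
  have hφ : 0 < φ₁ := mul_pos hρ.1 (Real.log_pos (lt_add_of_pos_right _ (div_pos hP hden)))
  have hc : 0 < (K : ℝ) * W * φ₁ := by positivity
  have ha : 0 < -Real.log Pe := neg_pos.2 (Real.log_neg hPe.1 hPe.2)
  have hlim : Tendsto f₁ atTop (𝓝 ((K : ℝ) * W * φ₁ / ρ)) :=
    (tendsto_mul_div_qceil hc.le ha.le hρ.1 hφ).comp
      (Real.tendsto_log_atTop.comp tendsto_natCast_atTop_atTop)
  have hbelow : f₁ M₁ < (K : ℝ) * W * φ₁ / ρ := mul_div_qceil_lt hc ha hρ.1 hφ _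
  exact ((eventually_gt_atTop M₁).and (hlim.eventually (lt_mem_nhds hbelow))).exists
end

section
/- Fix a bandwidth W > 0, noise density N₀ > 0, transmit power P > 0, an integer K ≥ 1, a parameter ρ ∈ (0,1], and a tolerable error probability P_e ∈ (0,1). Let φ₁ = ρ·ln(1 + P/((1+ρ)((K−1)P + N₀W))), and for each positive integer M let S₁(M) = −ln P_e + ρ·ln M and f₁(M) = K·W·φ₁·(ln M)/⌈S₁(M)⌉_{φ₁}. Then as M → ∞ (along the positive integers), f₁(M) converges to K·W·ln(1 + P/((1+ρ)((K−1)P + N₀W))), i.e., to K·W·φ₁/ρ. -/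
private lemma ratio_lim (ρ : ℝ) (hρ : 0 < ρ) (d : ℝ) :
    Filter.Tendsto (fun x : ℝ => x / (d + ρ * x)) Filter.atTop (nhds ρ⁻¹) := by
  have h0 : Filter.Tendsto (fun x : ℝ => d / x + ρ) Filter.atTop (nhds ρ) := by
    have := (Filter.Tendsto.div_atTop (tendsto_const_nhds (x := d)) Filter.tendsto_id).add
      (tendsto_const_nhds (x := ρ))
    simpa using this
  have h1 := h0.inv₀ (ne_of_gt hρ)
  apply h1.congr'
  filter_upwards [Filter.eventually_gt_atTop 0] with x hx
  have hdx : 0 < d + ρ * x ∨ d + ρ * x ≠ 0 ∨ True := by tauto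
  rw [div_add' _ _ _ (ne_of_gt hx), inv_div]

/-- Corollary 3 (limiting-value part): as the message alphabet size `M → ∞`, the maximum
stable nat arrival rate `f₁ M` converges to `K·W·ln(1 + P/((1+ρ)((K−1)P + N₀W)))`. -/
theorem stmt1 (W N₀ P : ℝ) (hW : 0 < W) (hN₀ : 0 < N₀) (hP : 0 < P)
    (K : ℕ) (hK : 1 ≤ K) (ρ : ℝ) (hρ : ρ ∈ Set.Ioc (0 : ℝ) 1)
    (Pe : ℝ) (hPe : Pe ∈ Set.Ioo (0 : ℝ) 1) :
    let φ₁ : ℝ := ρ * Real.log (1 + P / ((1 + ρ) * (((K : ℝ) - 1) * P + N₀ * W)))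
    let S₁ : ℕ → ℝ := fun M => -Real.log Pe + ρ * Real.log M
    let f₁ : ℕ → ℝ := fun M => (K : ℝ) * W * φ₁ * Real.log M / qceil (S₁ M) φ₁
    Filter.Tendsto f₁ Filter.atTop
      (nhds ((K : ℝ) * W * Real.log (1 + P / ((1 + ρ) * (((K : ℝ) - 1) * P + N₀ * W))))) := by
  obtain ⟨hρ0, hρ1⟩ := hρ
  obtain ⟨hPe0, hPe1⟩ := hPe
  intro φ₁ S₁ f₁
  set L : ℝ := Real.log (1 + P / ((1 + ρ) * (((K : ℝ) - 1) * P + N₀ * W))) with hLdef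
  have hK1 : (1 : ℝ) ≤ (K : ℝ) := by exact_mod_cast hK
  have hden : 0 < (1 + ρ) * (((K : ℝ) - 1) * P + N₀ * W) := by
    apply mul_pos (by linarith)
    have : 0 ≤ ((K : ℝ) - 1) * P := mul_nonneg (by linarith) hP.le
    nlinarith
  have hLpos : 0 < L := Real.log_pos (by nlinarith [div_pos hP hden])
  have hφ : 0 < φ₁ := mul_pos hρ0 hLpos
  set c : ℝ := -Real.log Pe with hcdef
  have hc : 0 < c := neg_pos.mpr (Real.log_neg hPe0 hPe1)
  have hlog : Filter.Tendsto (fun M : ℕ => Real.log M) Filter.atTop Filter.atTop :=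
    Real.tendsto_log_atTop.comp tendsto_natCast_atTop_atTop
  -- lower and upper bounding sequences
  have hA : 0 < (K : ℝ) * W * φ₁ := by positivity
  have hlim : ∀ d : ℝ, Filter.Tendsto
      (fun M : ℕ => (K : ℝ) * W * φ₁ * (Real.log M / (d + ρ * Real.log M)))
      Filter.atTop (nhds ((K : ℝ) * W * L)) := by
    intro d
    have := (tendsto_const_nhds (x := (K : ℝ) * W * φ₁)).mul ((ratio_lim ρ hρ0 d).comp hlog)
    have hφL : φ₁ = ρ * L := rfl
    have he : (K : ℝ) * W * φ₁ * ρ⁻¹ = (K : ℝ) * W * L := by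
      rw [hφL]; field_simp
    rw [he] at this
    exact this.congr (fun M => rfl)
  apply tendsto_of_tendsto_of_tendsto_of_le_of_le' (hlim (c + φ₁)) (hlim c)
  · -- lower bound
    filter_upwards [hlog.eventually_ge_atTop 0] with M hM
    have hS : 0 < S₁ M := by
      have : 0 ≤ ρ * Real.log M := mul_nonneg hρ0.le hM
      simp only [S₁]
      have : S₁ M = c + ρ * Real.log M := rfl
      linarith
    have hceil : (1 : ℤ) ≤ ⌈S₁ M / φ₁⌉ := by
      apply Int.one_le_ceil_iff.mpr
      positivity
    have hq : qceil (S₁ M) φ₁ ≤ S₁ M + φ₁ := by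
      unfold qceil
      rw [max_eq_right hceil]
      have := Int.ceil_lt_add_one (S₁ M / φ₁)
      have h2 : (⌈S₁ M / φ₁⌉ : ℝ) ≤ S₁ M / φ₁ + 1 := this.le
      calc φ₁ * (⌈S₁ M / φ₁⌉ : ℝ) ≤ φ₁ * (S₁ M / φ₁ + 1) := by
            exact mul_le_mul_of_nonneg_left h2 hφ.le
        _ = S₁ M + φ₁ := by field_simp
    have hqpos : 0 < qceil (S₁ M) φ₁ := by
      unfold qceil
      rw [max_eq_right hceil]
      have : (1 : ℝ) ≤ (⌈S₁ M / φ₁⌉ : ℝ) := by exact_mod_cast hceil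
      nlinarith
    have hSeq : S₁ M = c + ρ * Real.log M := rfl
    have key : (K : ℝ) * W * φ₁ * Real.log M / (S₁ M + φ₁) ≤ f₁ M := by
      simp only [f₁]
      apply div_le_div_of_nonneg_left _ hqpos hq
      positivity
    calc (K : ℝ) * W * φ₁ * (Real.log M / (c + φ₁ + ρ * Real.log M))
        = (K : ℝ) * W * φ₁ * Real.log M / (S₁ M + φ₁) := by
          rw [hSeq]; ring
      _ ≤ f₁ M := key
  · -- upper bound
    filter_upwards [hlog.eventually_ge_atTop 0] with M hM
    have hS : 0 < S₁ M := by
      have : 0 ≤ ρ * Real.log M := mul_nonneg hρ0.le hM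
      have : S₁ M = c + ρ * Real.log M := rfl
      linarith
    have hceil : (1 : ℤ) ≤ ⌈S₁ M / φ₁⌉ := by
      apply Int.one_le_ceil_iff.mpr
      positivity
    have hq : S₁ M ≤ qceil (S₁ M) φ₁ := by
      unfold qceil
      rw [max_eq_right hceil]
      have h2 : S₁ M / φ₁ ≤ (⌈S₁ M / φ₁⌉ : ℝ) := Int.le_ceil _
      calc S₁ M = φ₁ * (S₁ M / φ₁) := by field_simp
        _ ≤ φ₁ * (⌈S₁ M / φ₁⌉ : ℝ) := mul_le_mul_of_nonneg_left h2 hφ.le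
    have hSeq : S₁ M = c + ρ * Real.log M := rfl
    have key : f₁ M ≤ (K : ℝ) * W * φ₁ * Real.log M / S₁ M := by
      simp only [f₁]
      apply div_le_div_of_nonneg_left _ hS hq
      positivity
    calc f₁ M ≤ (K : ℝ) * W * φ₁ * Real.log M / S₁ M := key
      _ = (K : ℝ) * W * φ₁ * (Real.log M / (c + ρ * Real.log M)) := by
          rw [hSeq]; ring
end

section
/- Fix ρ ∈ (0,1], a noise power N > 0, an integer J ≥ 1, and power levels P₁, …, P_J > 0. For s = (s₁, …, s_J) ∈ ℤ₊^J define T(s) = Σ_j s_j·P_j and G(s) = Σ_j s_j·ρ·ln(1 + P_j/((1+ρ)(N + T(s) − P_j))). Then for every sequence of vectors s^(K) ∈ ℤ₊^J with Σ_j s_j^(K) = K, one has lim_{K→∞} G(s^(K)) = ρ/(1+ρ). In particular, the limit is independent of the power levels P₁, …, P_J, of the noise power N, and of the choice of the sequence of schedules; consequently both the minimum and the maximum over schedules of size K of the total available service quantum converge to ρ/(1+ρ) as K → ∞. -/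
/-!
Write `T = Σ_j s_j P_j` for the total received power. The bounds `x / (1 + x) ≤ log (1 + x) ≤ x`
applied to every message sandwich `G(s)` between `ρ/(1+ρ) · T/(N + T)` and
`ρ/(1+ρ) · T/(N - max_j P_j + T)`. Since all powers are positive, `T ≥ K · min_j P_j → ∞`,
and both bounds tend to `ρ/(1+ρ)`.
-/

open Filter Finset Real Topology

lemma div_one_add_le_log_one_add {x : ℝ} (hx : 0 ≤ x) : x / (1 + x) ≤ log (1 + x) :=
  calc x / (1 + x) = 1 - (1 + x)⁻¹ := by field_simp; ring
    _ ≤ log (1 + x) := one_sub_inv_le_log_of_pos (by linarith)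

lemma div_le_log_one_add_div {ρ p c : ℝ} (hρ : 0 ≤ ρ) (hp : 0 ≤ p) (hpc : p < c) :
    p / ((1 + ρ) * c) ≤ log (1 + p / ((1 + ρ) * (c - p))) := by
  have hcp : 0 < c - p := by linarith
  have hx : 0 ≤ p / ((1 + ρ) * (c - p)) := by positivity
  refine le_trans ?_ (div_one_add_le_log_one_add hx)
  have hratio : p / ((1 + ρ) * (c - p)) / (1 + p / ((1 + ρ) * (c - p)))
      = p / ((1 + ρ) * (c - p) + p) := by
    field_simp
  rw [hratio]
  exact div_le_div_of_nonneg_left hp (by positivity) (by nlinarith)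

lemma log_one_add_div_le {ρ p c M : ℝ} (hρ : 0 ≤ ρ) (hp : 0 ≤ p) (hpM : p ≤ M) (hMc : M < c) :
    log (1 + p / ((1 + ρ) * (c - p))) ≤ p / ((1 + ρ) * (c - M)) := by
  have hcM : 0 < c - M := by linarith
  have hcp : 0 < c - p := by linarith
  calc log (1 + p / ((1 + ρ) * (c - p))) ≤ p / ((1 + ρ) * (c - p)) := by
        linarith [log_le_sub_one_of_pos (x := 1 + p / ((1 + ρ) * (c - p))) (by positivity)]
    _ ≤ p / ((1 + ρ) * (c - M)) := div_le_div_of_nonneg_left hp (by positivity) (by nlinarith)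

lemma sum_mul_mul_div_eq {ι : Type*} (u : Finset ι) (w P : ι → ℝ) (ρ c : ℝ) :
    ∑ j ∈ u, w j * ρ * (P j / ((1 + ρ) * c)) = ρ / (1 + ρ) * ((∑ j ∈ u, w j * P j) / c) := by
  rw [sum_div, mul_sum]
  exact sum_congr rfl fun j _ => by simp only [div_eq_mul_inv, mul_inv]; ring

section Sandwich

variable {ι : Type*} (u : Finset ι) {w P : ι → ℝ} {ρ N M : ℝ}

lemma div_le_sum_mul_log_one_add_div (hρ : 0 ≤ ρ) (hw : ∀ j, 0 ≤ w j) (hP : ∀ j, 0 ≤ P j)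
    (hPM : ∀ j, P j ≤ M) (hT : M < N + ∑ j ∈ u, w j * P j) :
    ρ / (1 + ρ) * ((∑ j ∈ u, w j * P j) / (N + ∑ j ∈ u, w j * P j))
      ≤ ∑ j ∈ u, w j * ρ * log (1 + P j / ((1 + ρ) * (N + ∑ j ∈ u, w j * P j - P j))) := by
  rw [← sum_mul_mul_div_eq]
  refine sum_le_sum fun j _ => mul_le_mul_of_nonneg_left ?_ (mul_nonneg (hw j) hρ)
  exact div_le_log_one_add_div hρ (hP j) ((hPM j).trans_lt hT)

lemma sum_mul_log_one_add_div_le (hρ : 0 ≤ ρ) (hw : ∀ j, 0 ≤ w j) (hP : ∀ j, 0 ≤ P j)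
    (hPM : ∀ j, P j ≤ M) (hT : M < N + ∑ j ∈ u, w j * P j) :
    ∑ j ∈ u, w j * ρ * log (1 + P j / ((1 + ρ) * (N + ∑ j ∈ u, w j * P j - P j)))
      ≤ ρ / (1 + ρ) * ((∑ j ∈ u, w j * P j) / (N - M + ∑ j ∈ u, w j * P j)) := by
  rw [← sum_mul_mul_div_eq]
  refine sum_le_sum fun j _ => mul_le_mul_of_nonneg_left ?_ (mul_nonneg (hw j) hρ)
  rw [sub_add_eq_add_sub]
  exact log_one_add_div_le hρ (hP j) (hPM j) hT

end Sandwich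

lemma tendsto_div_const_add_atTop {α : Type*} {l : Filter α} {T : α → ℝ}
    (hT : Tendsto T l atTop) (a : ℝ) : Tendsto (fun x => T x / (a + T x)) l (𝓝 1) := by
  have hden : Tendsto (fun x => a + T x) l atTop := tendsto_atTop_add_const_left _ a hT
  have hlim : Tendsto (fun x => 1 - a / (a + T x)) l (𝓝 1) := by
    simpa using tendsto_const_nhds.sub (tendsto_const_nhds.div_atTop hden)
  refine hlim.congr' ?_
  filter_upwards [hden.eventually_gt_atTop 0] with x hx
  field_simp
  ring

lemma Finite.exists_pos_forall_le {ι : Type*} [Finite ι] {P : ι → ℝ} (hP : ∀ j, 0 < P j) :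
    ∃ m > 0, ∀ j, m ≤ P j := by
  cases isEmpty_or_nonempty ι
  · exact ⟨1, one_pos, isEmptyElim⟩
  · obtain ⟨i, hi⟩ := Finite.exists_min P
    exact ⟨P i, hP i, hi⟩

lemma tendsto_sum_natCast_mul_atTop {ι : Type*} [Fintype ι] {P : ι → ℝ} (hP : ∀ j, 0 < P j)
    {s : ℕ → ι → ℕ} (hs : ∀ K, ∑ j, s K j = K) :
    Tendsto (fun K => ∑ j, (s K j : ℝ) * P j) atTop atTop := by
  obtain ⟨m, hm, hmP⟩ := Finite.exists_pos_forall_le hP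
  refine tendsto_atTop_mono (fun K => ?_) (tendsto_natCast_atTop_atTop.atTop_mul_const hm)
  calc (K : ℝ) * m = ∑ j, (s K j : ℝ) * m := by rw [← sum_mul, ← Nat.cast_sum, hs K]
    _ ≤ ∑ j, (s K j : ℝ) * P j :=
      sum_le_sum fun j _ => mul_le_mul_of_nonneg_left (hmP j) (Nat.cast_nonneg _)

theorem tendsto_sum_mul_log_one_add_div {ι : Type*} [Fintype ι] {ρ : ℝ} (hρ : 0 ≤ ρ) (N : ℝ)
    {P : ι → ℝ} (hP : ∀ j, 0 < P j) {s : ℕ → ι → ℕ} (hs : ∀ K, ∑ j, s K j = K) :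
    Tendsto (fun K => ∑ j, (s K j : ℝ) * ρ *
        log (1 + P j / ((1 + ρ) * (N + ∑ j', (s K j' : ℝ) * P j' - P j))))
      atTop (𝓝 (ρ / (1 + ρ))) := by
  obtain ⟨M, hPM⟩ := Finite.exists_le P
  have hT := tendsto_sum_natCast_mul_atTop hP hs
  have hlim (a : ℝ) := by simpa using (tendsto_div_const_add_atTop hT a).const_mul (ρ / (1 + ρ))
  have hw (K : ℕ) (j : ι) : (0 : ℝ) ≤ s K j := Nat.cast_nonneg _
  have hP' (j : ι) := (hP j).le
  refine tendsto_of_tendsto_of_tendsto_of_le_of_le' (hlim N) (hlim (N - M)) ?_ ?_ <;>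
    filter_upwards [hT.eventually_gt_atTop (M - N)] with K hK
  · exact div_le_sum_mul_log_one_add_div _ hρ (hw K) hP' hPM (by linarith)
  · exact sum_mul_log_one_add_div_le _ hρ (hw K) hP' hPM (by linarith)

theorem stmt4_general (ρ N : ℝ) (hρ : ρ ∈ Set.Ioc (0 : ℝ) 1)
    (J : ℕ) (P : Fin J → ℝ) (hP : ∀ j, 0 < P j)
    (s : ℕ → Fin J → ℕ) (hs : ∀ K, ∑ j, s K j = K) :
    Filter.Tendsto
      (fun K : ℕ => ∑ j, (s K j : ℝ) * ρ *
        Real.log (1 + P j / ((1 + ρ) * (N + (∑ j', (s K j' : ℝ) * P j') - P j))))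
      Filter.atTop (nhds (ρ / (1 + ρ))) :=
  tendsto_sum_mul_log_one_add_div hρ.1.le N hP hs

/-- Analytic core of Corollary 1: for any sequence of schedules `s^(K)` with
`Σ_j s_j^(K) = K`, the total service quantum
`G(s^(K)) = Σ_j s_j·ρ·ln(1 + P_j/((1+ρ)(N + T(s) − P_j)))` converges to `ρ/(1+ρ)`
as `K → ∞`, independently of the power levels, the noise power, and the sequence. -/
theorem stmt4 (ρ N : ℝ) (hρ : ρ ∈ Set.Ioc (0 : ℝ) 1) (hN : 0 < N)
    (J : ℕ) (hJ : 1 ≤ J) (P : Fin J → ℝ) (hP : ∀ j, 0 < P j)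
    (s : ℕ → Fin J → ℕ) (hs : ∀ K, ∑ j, s K j = K) :
    Filter.Tendsto
      (fun K : ℕ => ∑ j, (s K j : ℝ) * ρ *
        Real.log (1 + P j / ((1 + ρ) * (N + (∑ j', (s K j' : ℝ) * P j') - P j))))
      Filter.atTop (nhds (ρ / (1 + ρ))) :=
  stmt4_general ρ N hρ J P hP s hs
end

section
/- Fix ρ ∈ (0,1], P_e ∈ (0,1), a finite index set I, nonnegative weights w_i for i ∈ I with Σ_{i∈I} w_i·φ_i > 0, and positive quanta φ_i > 0 for i ∈ I. For each positive integer M let S(M) = −ln P_e + ρ·ln M and g(M) = Σ_{i∈I} w_i·φ_i·(ln M)/⌈S(M)⌉_{φ_i}. Then for every positive integer M¹ there exists a positive integer M² > M¹ such that g(M²) > g(M¹). -/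
/-!
Since `S(M) ≤ ⌈S(M)⌉_φ < S(M) + φ` and `S(M) = c + ρ ln M` with `c = -ln P_e > 0`, each summand
`w φ ln M / ⌈S(M)⌉_φ` is squeezed between `w φ ln M / (S(M) + φ)` and `w φ ln M / S(M)`, so `g(M)`
tends to `(Σ w φ) / ρ`. The upper bound also gives `g(M) ≤ (Σ w φ) ln M / (c + ρ ln M) < (Σ w φ) / ρ`
for every `M`, hence `g` eventually exceeds any of its values.
-/

open Filter Topology

section qceil

variable {x q : ℝ}

lemma qceil_lt_add (hx : 0 < x) (hq : 0 < q) : qceil x q < x + q := by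
  have hceil : (1 : ℤ) ≤ ⌈x / q⌉ := Int.ceil_pos.mpr (div_pos hx hq)
  calc qceil x q = q * ⌈x / q⌉ := by simp [qceil, max_eq_right hceil]
    _ < q * (x / q + 1) := by gcongr; exact Int.ceil_lt_add_one _
    _ = x + q := by field_simp

end qceil

lemma tendsto_div_affine_atTop {ρ : ℝ} (a : ℝ) (hρ : 0 < ρ) :
    Tendsto (fun x : ℝ => x / (a + ρ * x)) atTop (𝓝 ρ⁻¹) := by
  have h : Tendsto (fun x : ℝ => a / x + ρ) atTop (𝓝 ρ) := by
    simpa using (tendsto_const_nhds.div_atTop tendsto_id).add (tendsto_const_nhds (x := ρ))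
  refine (h.inv₀ hρ.ne').congr' ?_
  filter_upwards [eventually_gt_atTop 0] with x hx
  rw [div_add' _ _ _ hx.ne', inv_div]

lemma tendsto_div_qceil_affine_atTop {ρ q : ℝ} (a : ℝ) (hρ : 0 < ρ) (hq : 0 < q) :
    Tendsto (fun x : ℝ => x / qceil (a + ρ * x) q) atTop (𝓝 ρ⁻¹) := by
  have hlower : Tendsto (fun x : ℝ => x / (a + ρ * x + q)) atTop (𝓝 ρ⁻¹) :=
    (tendsto_div_affine_atTop (a + q) hρ).congr fun x => by ring_nf
  have hpos : ∀ᶠ x in atTop, 0 < x ∧ 0 < a + ρ * x := by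
    refine (eventually_gt_atTop 0).and ?_
    exact (tendsto_atTop_add_const_left _ a (tendsto_id.const_mul_atTop hρ)).eventually_gt_atTop 0
  refine tendsto_of_tendsto_of_tendsto_of_le_of_le' hlower (tendsto_div_affine_atTop a hρ) ?_ ?_
  · filter_upwards [hpos] with x ⟨hx, hax⟩
    gcongr
    · exact qceil_pos hq
    · exact (qceil_lt_add hax hq).le
  · filter_upwards [hpos] with x ⟨hx, hax⟩
    gcongr
    exact le_qceil hq

section weightedSum

variable {ι : Type*} [Fintype ι] {w φ : ι → ℝ} {ρ : ℝ}

lemma tendsto_sum_mul_div_qceil_atTop (a : ℝ) (hρ : 0 < ρ) (hφ : ∀ i, 0 < φ i) :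
    Tendsto (fun x : ℝ => ∑ i, w i * φ i * x / qceil (a + ρ * x) (φ i)) atTop
      (𝓝 ((∑ i, w i * φ i) * ρ⁻¹)) := by
  rw [Finset.sum_mul]
  refine tendsto_finsetSum _ fun i _ => ?_
  simpa only [mul_div_assoc] using
    (tendsto_div_qceil_affine_atTop a hρ (hφ i)).const_mul (w i * φ i)

lemma sum_mul_div_qceil_lt {c x : ℝ} (hρ : 0 < ρ) (hc : 0 < c) (hx : 0 ≤ x)
    (hw : ∀ i, 0 ≤ w i) (hφ : ∀ i, 0 < φ i) (hpos : 0 < ∑ i, w i * φ i) :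
    ∑ i, w i * φ i * x / qceil (c + ρ * x) (φ i) < (∑ i, w i * φ i) * ρ⁻¹ := by
  have hS : 0 < c + ρ * x := by positivity
  calc ∑ i, w i * φ i * x / qceil (c + ρ * x) (φ i)
      ≤ ∑ i, w i * φ i * (x / (c + ρ * x)) := by
        refine Finset.sum_le_sum fun i _ => ?_
        rw [← mul_div_assoc]
        have := hw i; have := hφ i
        gcongr
        exact le_qceil (hφ i)
    _ = (∑ i, w i * φ i) * (x / (c + ρ * x)) := (Finset.sum_mul ..).symm
    _ < (∑ i, w i * φ i) * ρ⁻¹ := by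
        gcongr
        rw [div_lt_iff₀ hS, inv_mul_eq_div, lt_div_iff₀ hρ]
        linarith

end weightedSum

/-- Monotonicity part of the capacity-interpretation corollary for state-independent
scheduling policies: the nat arrival rate threshold
`g(M) = Σ_i w_i·φ_i·(ln M)/⌈S(M)⌉_{φ_i}` increases with the message alphabet size. -/
theorem stmt9 (ρ Pe : ℝ) (hρ : ρ ∈ Set.Ioc (0 : ℝ) 1) (hPe : Pe ∈ Set.Ioo (0 : ℝ) 1)
    (I : Type*) [Fintype I] (w φ : I → ℝ) (hw : ∀ i, 0 ≤ w i) (hφ : ∀ i, 0 < φ i)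
    (hpos : 0 < ∑ i, w i * φ i) :
    let S : ℕ → ℝ := fun M => -Real.log Pe + ρ * Real.log M
    let g : ℕ → ℝ := fun M => ∑ i, w i * φ i * Real.log M / qceil (S M) (φ i)
    ∀ M₁ : ℕ, 0 < M₁ → ∃ M₂ : ℕ, M₁ < M₂ ∧ g M₁ < g M₂ := by
  intro S g M₁ hM₁
  have hc : 0 < -Real.log Pe := neg_pos.mpr (Real.log_neg hPe.1 hPe.2)
  have hlim : Tendsto g atTop (𝓝 ((∑ i, w i * φ i) * ρ⁻¹)) :=
    (tendsto_sum_mul_div_qceil_atTop _ hρ.1 hφ).comp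
      (Real.tendsto_log_atTop.comp tendsto_natCast_atTop_atTop)
  have hlt : g M₁ < (∑ i, w i * φ i) * ρ⁻¹ :=
    sum_mul_div_qceil_lt hρ.1 hc (Real.log_natCast_nonneg M₁) hw hφ hpos
  obtain ⟨M₂, hgt, hM₂⟩ :=
    ((hlim.eventually (eventually_gt_nhds hlt)).and (eventually_gt_atTop M₁)).exists
  exact ⟨M₂, hM₂, hgt⟩
end

section
/- Let Z be a real-valued random variable on a probability space such that Z ≥ −b almost surely for some constant b ≥ 0, Z is integrable, and 𝔼[Z] > 0. Then there exists θ ∈ (0,1) such that 𝔼[θ^Z] < 1. -/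
open MeasureTheory ProbabilityTheory Filter Topology Real Set

/-!
Write `θ = exp (-t)`, so that `𝔼[θ ^ Z] = mgf (-Z) t`. The moment generating function of a
random variable `X` bounded above is finite on `[0, ∞)`, equals `1` at `0`, and has right
derivative `𝔼[X]` there: by convexity of `exp`, the difference quotients `t⁻¹ (exp (t x) - 1)`
lie between `x` and `exp x - 1` for `t ∈ (0, 1]`, so dominated convergence applies. For
`X = -Z` this derivative is negative, so `mgf (-Z) t < 1` for all small `t > 0`.
-/

lemma le_inv_mul_exp_mul_sub_one {t : ℝ} (ht : 0 < t) (x : ℝ) :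
    x ≤ t⁻¹ * (exp (t * x) - 1) := by
  rw [le_inv_mul_iff₀ ht]
  linarith [add_one_le_exp (t * x)]

lemma inv_mul_exp_mul_sub_one_le {t : ℝ} (ht₀ : 0 < t) (ht₁ : t ≤ 1) (x : ℝ) :
    t⁻¹ * (exp (t * x) - 1) ≤ exp x - 1 := by
  have hconvex := convexOn_exp.2 (mem_univ x) (mem_univ 0) ht₀.le (sub_nonneg.2 ht₁)
    (add_sub_cancel t 1)
  simp only [smul_eq_mul, mul_zero, add_zero, exp_zero, mul_one] at hconvex
  rw [inv_mul_le_iff₀ ht₀]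
  linarith

lemma tendsto_inv_mul_exp_mul_sub_one (x : ℝ) :
    Tendsto (fun t ↦ t⁻¹ * (exp (t * x) - 1)) (𝓝[>] 0) (𝓝 x) := by
  have h : HasDerivAt (fun s ↦ exp (s * x)) x 0 := by
    simpa using ((hasDerivAt_id (0 : ℝ)).mul_const x).exp
  simpa using h.tendsto_slope_zero_right

section

variable {Ω : Type*} [MeasurableSpace Ω] {μ : Measure Ω} [IsProbabilityMeasure μ] {X : Ω → ℝ}
  {b : ℝ}

lemma slope_mgf_zero_eq_integral (hX : AEMeasurable X μ) (hb : ∀ᵐ ω ∂μ, X ω ≤ b) {t : ℝ}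
    (ht : 0 ≤ t) :
    slope (mgf X μ) 0 t = ∫ ω, t⁻¹ * (exp (t * X ω) - 1) ∂μ := by
  rw [slope_def_field, mgf_zero, sub_zero, integral_const_mul,
    integral_sub (integrable_exp_mul_of_le t b ht hX hb) (integrable_const 1), integral_const,
    probReal_univ, one_smul, div_eq_inv_mul, mgf]

theorem hasDerivWithinAt_mgf_zero_of_ae_le (hX : Integrable X μ) (hb : ∀ᵐ ω ∂μ, X ω ≤ b) :
    HasDerivWithinAt (mgf X μ) μ[X] (Ici 0) 0 := by
  rw [← hasDerivWithinAt_Ioi_iff_Ici, hasDerivWithinAt_iff_tendsto_slope' self_notMem_Ioi]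
  have hexp : Integrable (fun ω ↦ exp (X ω)) μ := by
    simpa using integrable_exp_mul_of_le 1 b zero_le_one hX.aemeasurable hb
  have hbound : ∀ᶠ t in 𝓝[>] (0 : ℝ), ∀ᵐ ω ∂μ,
      ‖t⁻¹ * (exp (t * X ω) - 1)‖ ≤ |X ω| + |exp (X ω) - 1| := by
    filter_upwards [Ioc_mem_nhdsGT zero_lt_one] with t ⟨ht₀, ht₁⟩
    refine Eventually.of_forall fun ω ↦ ?_
    calc ‖t⁻¹ * (exp (t * X ω) - 1)‖
        ≤ max |X ω| |exp (X ω) - 1| :=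
          abs_le_max_abs_abs (le_inv_mul_exp_mul_sub_one ht₀ _)
            (inv_mul_exp_mul_sub_one_le ht₀ ht₁ _)
      _ ≤ |X ω| + |exp (X ω) - 1| := max_le_add_of_nonneg (abs_nonneg _) (abs_nonneg _)
  have hdom := tendsto_integral_filter_of_dominated_convergence _
    (Eventually.of_forall fun t ↦ by fun_prop (disch := exact hX.aemeasurable))
    hbound (hX.abs.add (hexp.sub (integrable_const 1)).abs)
    (Eventually.of_forall fun ω ↦ tendsto_inv_mul_exp_mul_sub_one (X ω))
  refine hdom.congr' ?_
  filter_upwards [self_mem_nhdsWithin] with t ht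
  exact (slope_mgf_zero_eq_integral hX.aemeasurable hb (le_of_lt ht)).symm

end

theorem stmt12_general {Ω : Type*} [MeasurableSpace Ω] (μ : Measure Ω) [IsProbabilityMeasure μ]
    (Z : Ω → ℝ) (b : ℝ) (hZb : ∀ᵐ ω ∂μ, -b ≤ Z ω)
    (hint : Integrable Z μ) (hpos : 0 < ∫ ω, Z ω ∂μ) :
    ∃ θ : ℝ, θ ∈ Set.Ioo (0 : ℝ) 1 ∧ (∫ ω, θ ^ Z ω ∂μ) < 1 := by
  have hderiv := hasDerivWithinAt_mgf_zero_of_ae_le (X := -Z) (b := b) hint.neg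
    (by filter_upwards [hZb] with ω hω using neg_le.1 hω)
  rw [← hasDerivWithinAt_Ioi_iff_Ici, hasDerivWithinAt_iff_tendsto_slope' self_notMem_Ioi] at hderiv
  have hmean : μ[-Z] < 0 := by simpa [integral_neg] using hpos
  obtain ⟨t, hslope, ht₀, ht₁⟩ :=
    ((hderiv.eventually_lt_const hmean).and (Ioo_mem_nhdsGT zero_lt_one)).exists
  refine ⟨exp (-t), ⟨exp_pos _, exp_lt_one_iff.2 (neg_lt_zero.2 ht₀)⟩, ?_⟩
  rw [slope_def_field, mgf_zero, sub_zero, div_lt_iff₀ ht₀, zero_mul, sub_neg] at hslope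
  refine lt_of_eq_of_lt (integral_congr_ae (Eventually.of_forall fun ω ↦ ?_)) hslope
  simp only [← exp_mul, Pi.neg_apply, mul_neg, neg_mul]

/-- Key supporting lemma for the transience proofs: if `Z ≥ −b` a.s. for some `b ≥ 0`,
`Z` is integrable, and `𝔼[Z] > 0`, then there exists `θ ∈ (0,1)` with `𝔼[θ^Z] < 1`. -/
theorem stmt12 {Ω : Type*} [MeasurableSpace Ω] (μ : Measure Ω) [IsProbabilityMeasure μ]
    (Z : Ω → ℝ) (b : ℝ) (hb : 0 ≤ b) (hZb : ∀ᵐ ω ∂μ, -b ≤ Z ω)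
    (hint : Integrable Z μ) (hpos : 0 < ∫ ω, Z ω ∂μ) :
    ∃ θ : ℝ, θ ∈ Set.Ioo (0 : ℝ) 1 ∧ (∫ ω, θ ^ Z ω ∂μ) < 1 :=
  stmt12_general μ Z b hZb hint hpos
end
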